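/- arXiv:1409.6072 — 5 statements merged into one kernel-verified Lean document; each statement's English description precedes it below -/
import Mathlib

section
/- Let n ≥ 2, K a field, S = K[x_1,…,x_n], and I = I(P_n) the edge ideal of the path P_n. Then sdepth(S/I) = ⌈n/3⌉. -/
open MvPolynomial

/-- The edge ideal `I(P_m)` of the path `P_m` on vertices `x_1, …, x_m`
(0-indexed as `X 0, …, X (m-1)`), regarded as an ideal of `S = K[x_1, …, x_n]`:
it is generated by the monomials `X i * X (i+1)` for `i + 2 ≤ m`
(1-indexed: `x_i x_{i+1}` for `1 ≤ i ≤ m - 1`). -/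
noncomputable def pathIdeal (K : Type*) [Field K] (n m : ℕ) :
    Ideal (MvPolynomial (Fin n) K) :=
  Ideal.span {p | ∃ i j : Fin n, (j : ℕ) = (i : ℕ) + 1 ∧ (i : ℕ) + 2 ≤ m ∧ p = X i * X j}

/-- A (combinatorial) Stanley decomposition of `S/I` for a monomial ideal `I` of
`S = K[x_1, …, x_n]`: a finite family of Stanley spaces `u K[Z]`, encoded as pairs
`(u, Z)` of an exponent vector `u` and a set of variables `Z`, such that each
Stanley space consists of monomials not in `I` (so `u K[Z]` is a free
`K[Z]`-module inside `S/I`) and every monomial not in `I` lies in exactly one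
Stanley space (so `S/I` is the direct sum of the Stanley spaces as `ℤⁿ`-graded
`K`-vector spaces). -/
def IsStanleyDecomp {K : Type*} [Field K] {n : ℕ} (I : Ideal (MvPolynomial (Fin n) K))
    (D : Finset ((Fin n →₀ ℕ) × Finset (Fin n))) : Prop :=
  (∀ p ∈ D, ∀ v : Fin n →₀ ℕ, v.support ⊆ p.2 → (monomial (p.1 + v) (1 : K)) ∉ I) ∧
  ∀ a : Fin n →₀ ℕ, (monomial a (1 : K)) ∉ I →
    ∃! p : (Fin n →₀ ℕ) × Finset (Fin n), p ∈ D ∧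
      ∃ v : Fin n →₀ ℕ, v.support ⊆ p.2 ∧ a = p.1 + v

/-- The Stanley depth `sdepth (S/I)` of the quotient by a monomial ideal `I`:
the largest `s` such that some Stanley decomposition of `S/I` has all its
Stanley spaces of dimension `|Z| ≥ s`. -/
noncomputable def sdepth {K : Type*} [Field K] {n : ℕ}
    (I : Ideal (MvPolynomial (Fin n) K)) : ℕ :=
  sSup {s : ℕ | ∃ D, IsStanleyDecomp I D ∧ ∀ p ∈ D, s ≤ p.2.card}

/-!
Lower bound: a standard monomial of `I(P_n)` in `x_k, …, x_{n-1}` either avoids `x_{k+1}`, and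
then it is `x_k ^ c` times a standard monomial in `x_{k+2}, …`, or it is divisible by `x_{k+1}`,
and then it avoids `x_k, x_{k+2}` and is `x_{k+1} ^ (c+1)` times a standard monomial in
`x_{k+3}, …`. Recursing gives a Stanley decomposition that gains one free variable for every at
most three variables consumed, i.e. of depth `⌈n/3⌉`.

Upper bound: let `T = {x_1, x_4, x_7, …}` (0-indexed, the last one clipped to `x_{n-1}`), an
independent dominating set of `P_n` of size `⌈n/3⌉`. The monomial `∏_{t ∈ T} x_t` is standard,
and any Stanley space `u K[Z]` containing it has `Z ⊆ T`, since multiplying it by a variable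
outside `T` lands in `I(P_n)`.
-/

section StanleyDecomposition

variable {σ : Type*}

def IsStanleyDecompOf (Q : (σ →₀ ℕ) → Prop) (D : Finset ((σ →₀ ℕ) × Finset σ)) : Prop :=
  (∀ p ∈ D, ∀ v : σ →₀ ℕ, v.support ⊆ p.2 → Q (p.1 + v)) ∧
  ∀ a : σ →₀ ℕ, Q a →
    ∃! p : (σ →₀ ℕ) × Finset σ, p ∈ D ∧ ∃ v : σ →₀ ℕ, v.support ⊆ p.2 ∧ a = p.1 + v

def StanleyDepthAtLeast (Q : (σ →₀ ℕ) → Prop) (s : ℕ) : Prop :=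
  ∃ D, IsStanleyDecompOf Q D ∧ ∀ p ∈ D, s ≤ p.2.card

namespace IsStanleyDecompOf

variable {Q : (σ →₀ ℕ) → Prop} {D : Finset ((σ →₀ ℕ) × Finset σ)}

theorem fst_apply_eq_zero (hD : IsStanleyDecompOf Q D) {t : σ} (hQ : ∀ a, Q a → a t = 0)
    {p : (σ →₀ ℕ) × Finset σ} (hp : p ∈ D) : p.1 t = 0 := by
  simpa using hQ _ (hD.1 p hp 0 (by simp))

theorem notMem_snd (hD : IsStanleyDecompOf Q D) {t : σ} (hQ : ∀ a, Q a → a t = 0)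
    {p : (σ →₀ ℕ) × Finset σ} (hp : p ∈ D) : t ∉ p.2 := fun ht => by
  classical
  simpa using hQ _ (hD.1 p hp (Finsupp.single t 1) (by simpa using ht))

theorem exists_forall_mem_add_single (hD : IsStanleyDecompOf Q D) {a : σ →₀ ℕ} (ha : Q a) :
    ∃ p ∈ D, ∀ i ∈ p.2, Q (a + Finsupp.single i 1) := by
  classical
  obtain ⟨p, ⟨hp, v, hv, rfl⟩, -⟩ := hD.2 a ha
  refine ⟨p, hp, fun i hi => ?_⟩
  rw [add_assoc]
  exact hD.1 p hp _ (Finsupp.support_add.trans (Finset.union_subset hv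
    (Finsupp.support_single_subset.trans (Finset.singleton_subset_iff.mpr hi))))

variable [DecidableEq σ]

theorem union {Q₁ Q₂ : (σ →₀ ℕ) → Prop} {D₁ D₂ : Finset ((σ →₀ ℕ) × Finset σ)}
    (h₁ : IsStanleyDecompOf Q₁ D₁) (h₂ : IsStanleyDecompOf Q₂ D₂)
    (hdisj : ∀ a, Q₁ a → ¬Q₂ a) :
    IsStanleyDecompOf (fun a => Q₁ a ∨ Q₂ a) (D₁ ∪ D₂) := by
  refine ⟨fun p hp v hv => ?_, fun a ha => ?_⟩
  · rcases Finset.mem_union.mp hp with hp | hp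
    exacts [Or.inl (h₁.1 p hp v hv), Or.inr (h₂.1 p hp v hv)]
  rcases ha with ha | ha
  · obtain ⟨p, ⟨hp, hap⟩, huniq⟩ := h₁.2 a ha
    refine ⟨p, ⟨Finset.mem_union_left _ hp, hap⟩, fun q ⟨hq, haq⟩ => ?_⟩
    rcases Finset.mem_union.mp hq with hq | hq
    · exact huniq q ⟨hq, haq⟩
    · obtain ⟨v, hv, rfl⟩ := haq
      exact absurd (h₂.1 q hq v hv) (hdisj _ ha)
  · obtain ⟨p, ⟨hp, hap⟩, huniq⟩ := h₂.2 a ha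
    refine ⟨p, ⟨Finset.mem_union_right _ hp, hap⟩, fun q ⟨hq, haq⟩ => ?_⟩
    rcases Finset.mem_union.mp hq with hq | hq
    · obtain ⟨v, hv, rfl⟩ := haq
      exact absurd ha (hdisj _ (h₁.1 q hq v hv))
    · exact huniq q ⟨hq, haq⟩

theorem image_insert (hD : IsStanleyDecompOf Q D) {t : σ} (hQ : ∀ a, Q a → a t = 0) (c : ℕ) :
    IsStanleyDecompOf (fun a => c ≤ a t ∧ Q (a.erase t))
      (D.image fun p => (p.1 + Finsupp.single t c, insert t p.2)) := by
  have erase_add_left : ∀ {p}, p ∈ D → ∀ w : σ →₀ ℕ, (p.1 + w).erase t = p.1 + w.erase t :=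
    fun hp w => by
      rw [Finsupp.erase_add, Finsupp.erase_of_notMem_support
        (Finsupp.notMem_support_iff.mpr (hD.fst_apply_eq_zero hQ hp))]
  have erase_subset : ∀ {Z : Finset σ} {w : σ →₀ ℕ}, w.support ⊆ insert t Z →
      (w.erase t).support ⊆ Z := fun hw i hi => by
    rw [Finsupp.support_erase, Finset.mem_erase] at hi
    exact (Finset.mem_insert.mp (hw hi.2)).resolve_left hi.1
  refine ⟨?_, fun a ⟨hca, ha⟩ => ?_⟩
  · rintro _ hq w hw
    obtain ⟨p, hp, rfl⟩ := Finset.mem_image.mp hq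
    refine ⟨by simp only [Finsupp.add_apply, Finsupp.single_eq_same]; omega, ?_⟩
    rw [add_assoc, erase_add_left hp, Finsupp.erase_add, Finsupp.erase_single, zero_add]
    exact hD.1 p hp _ (erase_subset hw)
  obtain ⟨p, ⟨hp, v, hv, hav⟩, huniq⟩ := hD.2 _ ha
  refine ⟨(p.1 + Finsupp.single t c, insert t p.2),
    ⟨Finset.mem_image_of_mem _ hp, v + Finsupp.single t (a t - c), ?_, ?_⟩, ?_⟩
  · refine Finsupp.support_add.trans (Finset.union_subset (hv.trans (Finset.subset_insert _ _)) ?_)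
    exact Finsupp.support_single_subset.trans (by simp)
  · calc a = a.erase t + Finsupp.single t (a t) := (Finsupp.erase_add_single t a).symm
      _ = p.1 + v + (Finsupp.single t c + Finsupp.single t (a t - c)) := by
        rw [hav, ← Finsupp.single_add, Nat.add_sub_cancel' hca]
      _ = p.1 + Finsupp.single t c + (v + Finsupp.single t (a t - c)) := by abel
  · rintro _ ⟨hq, w, hw, rfl⟩
    obtain ⟨p', hp', rfl⟩ := Finset.mem_image.mp hq
    rw [huniq p' ⟨hp', w.erase t, erase_subset hw, by
      rw [add_assoc, erase_add_left hp', Finsupp.erase_add, Finsupp.erase_single, zero_add]⟩]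

end IsStanleyDecompOf

theorem stanleyDepthAtLeast_eq_zero : StanleyDepthAtLeast (fun a : σ →₀ ℕ => a = 0) 0 := by
  refine ⟨{(0, ∅)}, ⟨fun p hp v hv => ?_, fun a ha =>
    ⟨(0, ∅), ⟨Finset.mem_singleton_self _, 0, by simp, by simp [ha]⟩, ?_⟩⟩, by simp⟩
  · obtain rfl := Finset.mem_singleton.mp hp
    simpa using hv
  · rintro q ⟨hq, -⟩
    exact Finset.mem_singleton.mp hq

namespace StanleyDepthAtLeast

variable {Q Q' : (σ →₀ ℕ) → Prop} {s s' : ℕ}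

theorem congr (h : StanleyDepthAtLeast Q s) (hQ : ∀ a, Q a ↔ Q' a) : StanleyDepthAtLeast Q' s := by
  obtain rfl : Q = Q' := funext fun a => propext (hQ a)
  exact h

theorem mono (h : StanleyDepthAtLeast Q s) (hs : s' ≤ s) : StanleyDepthAtLeast Q s' :=
  let ⟨D, hD, hcard⟩ := h
  ⟨D, hD, fun p hp => hs.trans (hcard p hp)⟩

variable [DecidableEq σ]

theorem union {Q₁ Q₂ : (σ →₀ ℕ) → Prop} (h₁ : StanleyDepthAtLeast Q₁ s)
    (h₂ : StanleyDepthAtLeast Q₂ s) (hdisj : ∀ a, Q₁ a → ¬Q₂ a) :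
    StanleyDepthAtLeast (fun a => Q₁ a ∨ Q₂ a) s := by
  obtain ⟨D₁, hD₁, hcard₁⟩ := h₁
  obtain ⟨D₂, hD₂, hcard₂⟩ := h₂
  refine ⟨D₁ ∪ D₂, hD₁.union hD₂ hdisj, fun p hp => ?_⟩
  rcases Finset.mem_union.mp hp with hp | hp
  exacts [hcard₁ p hp, hcard₂ p hp]

theorem insert (h : StanleyDepthAtLeast Q s) {t : σ} (hQ : ∀ a, Q a → a t = 0) (c : ℕ) :
    StanleyDepthAtLeast (fun a => c ≤ a t ∧ Q (a.erase t)) (s + 1) := by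
  obtain ⟨D, hD, hcard⟩ := h
  refine ⟨_, hD.image_insert hQ c, fun q hq => ?_⟩
  obtain ⟨p, hp, rfl⟩ := Finset.mem_image.mp hq
  rw [Finset.card_insert_of_notMem (hD.notMem_snd hQ hp)]
  exact Nat.succ_le_succ (hcard p hp)

end StanleyDepthAtLeast

theorem sdepth_eq_of_stanleyDepthAtLeast {K : Type*} [Field K] {n : ℕ}
    {I : Ideal (MvPolynomial (Fin n) K)} {Q : (Fin n →₀ ℕ) → Prop} (hQ : ∀ a, monomial a (1 : K) ∉ I ↔ Q a) {s : ℕ}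
    (hlower : StanleyDepthAtLeast Q s)
    (hupper : ∀ D, IsStanleyDecompOf Q D → ∃ p ∈ D, p.2.card ≤ s) :
    sdepth I = s := by
  obtain rfl : (fun a => monomial a (1 : K) ∉ I) = Q := funext fun a => propext (hQ a)
  refine IsGreatest.csSup_eq ⟨hlower, ?_⟩
  rintro s' ⟨D, hD, hcard⟩
  obtain ⟨p, hp, hle⟩ := hupper D hD
  exact (hcard p hp).trans hle

end StanleyDecomposition

/-- `a` is the exponent of a monomial in `x_k, …, x_{n-1}` (0-indexed) lying outside `I(P_n)`. -/
def PathStandard (n k : ℕ) (a : Fin n →₀ ℕ) : Prop :=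
  (∀ i : Fin n, (i : ℕ) < k → a i = 0) ∧ ∀ i j : Fin n, (j : ℕ) = i + 1 → a i = 0 ∨ a j = 0

section PathStandard

variable {n k : ℕ} {a : Fin n →₀ ℕ}

theorem pathStandard_iff_eq_zero (h : n ≤ k) : PathStandard n k a ↔ a = 0 := by
  refine ⟨fun ha => Finsupp.ext fun i => ha.1 i (by omega), ?_⟩
  rintro rfl
  exact ⟨fun _ _ => rfl, fun _ _ _ => Or.inl rfl⟩

theorem pathStandard_iff_erase (t : Fin n) (ht : (t : ℕ) = k)
    (h : ∀ i : Fin n, (i : ℕ) = k + 1 → a i = 0) :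
    PathStandard n k a ↔ PathStandard n (k + 2) (a.erase t) := by
  simp only [PathStandard, Finsupp.erase_apply, Fin.ext_iff]
  grind

theorem pathStandard_iff_erase_of_ne_zero (t : Fin n) (ht : (t : ℕ) = k + 1) (h : a t ≠ 0) :
    PathStandard n k a ↔ PathStandard n (k + 3) (a.erase t) := by
  simp only [PathStandard, Finsupp.erase_apply, Fin.ext_iff]
  grind

theorem apply_eq_zero_of_pathStandard_erase (t t' : Fin n) (ht : (t : ℕ) = k)
    (ht' : (t' : ℕ) = k + 1) (h : PathStandard n (k + 2) (a.erase t)) : a t' = 0 := by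
  have hne : t' ≠ t := fun heq => by rw [Fin.ext_iff] at heq; omega
  simpa [Finsupp.erase_ne hne] using h.1 t' (by omega)

theorem pathStandard_iff_or (t t' : Fin n) (ht : (t : ℕ) = k) (ht' : (t' : ℕ) = k + 1) :
    PathStandard n k a ↔ (0 ≤ a t ∧ PathStandard n (k + 2) (a.erase t)) ∨
      (1 ≤ a t' ∧ PathStandard n (k + 3) (a.erase t')) := by
  have eq_t' : ∀ i : Fin n, (i : ℕ) = k + 1 → i = t' := fun i hi => Fin.ext (hi.trans ht'.symm)
  constructor
  · intro ha
    by_cases ha' : a t' = 0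
    · refine Or.inl ⟨Nat.zero_le _, (pathStandard_iff_erase t ht fun i hi => ?_).mp ha⟩
      rwa [eq_t' i hi]
    · exact Or.inr ⟨by omega, (pathStandard_iff_erase_of_ne_zero t' ht' ha').mp ha⟩
  · rintro (⟨-, ha⟩ | ⟨ha', ha⟩)
    · refine (pathStandard_iff_erase t ht fun i hi => ?_).mpr ha
      rw [eq_t' i hi, apply_eq_zero_of_pathStandard_erase t t' ht ht' ha]
    · exact (pathStandard_iff_erase_of_ne_zero t' ht' (by omega)).mpr ha

end PathStandard

theorem stanleyDepthAtLeast_pathStandard (n k : ℕ) :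
    StanleyDepthAtLeast (PathStandard n k) ((n - k + 2) / 3) := by
  by_cases hnk : n ≤ k
  · exact (stanleyDepthAtLeast_eq_zero.congr fun a => (pathStandard_iff_eq_zero hnk).symm).mono
      (by omega)
  let t : Fin n := ⟨k, by omega⟩
  have hQ₂ : ∀ a, PathStandard n (k + 2) a → a t = 0 := fun _ ha => ha.1 t (by simp [t])
  have h₂ := (stanleyDepthAtLeast_pathStandard n (k + 2)).insert hQ₂ 0
  by_cases hnk' : n = k + 1
  · refine (h₂.mono (by omega)).congr fun a => ?_
    rw [pathStandard_iff_erase (k := k) t rfl (fun i hi => by omega)]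
    simp
  let t' : Fin n := ⟨k + 1, by omega⟩
  have hQ₃ : ∀ a, PathStandard n (k + 3) a → a t' = 0 := fun _ ha => ha.1 t' (by simp [t'])
  have h₃ := (stanleyDepthAtLeast_pathStandard n (k + 3)).insert hQ₃ 1
  refine ((h₂.mono (by omega)).union (h₃.mono (by omega)) ?_).congr fun a =>
    (pathStandard_iff_or t t' rfl rfl).symm
  rintro a ⟨-, ha⟩ ⟨ha', -⟩
  have := apply_eq_zero_of_pathStandard_erase t t' rfl rfl ha
  omega
termination_by n - k

def pathDominatingSet (n : ℕ) : Finset (Fin n) :=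
  Finset.univ.image fun j : Fin ((n + 2) / 3) => ⟨min (3 * j + 1) (n - 1), by omega⟩

section PathDominatingSet

variable {n : ℕ}

theorem mem_pathDominatingSet {i : Fin n} :
    i ∈ pathDominatingSet n ↔ ∃ j < (n + 2) / 3, (i : ℕ) = min (3 * j + 1) (n - 1) := by
  simp only [pathDominatingSet, Finset.mem_image, Finset.mem_univ, true_and, Fin.ext_iff]
  exact ⟨fun ⟨j, hj⟩ => ⟨j, j.2, hj.symm⟩, fun ⟨j, hj, hi⟩ => ⟨⟨j, hj⟩, hi.symm⟩⟩

theorem card_pathDominatingSet_le : (pathDominatingSet n).card ≤ (n + 2) / 3 :=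
  Finset.card_image_le.trans (by simp)

theorem pathStandard_indicator_pathDominatingSet :
    PathStandard n 0 (Finsupp.indicator (pathDominatingSet n) fun _ _ => 1) := by
  refine ⟨fun _ h => absurd h (Nat.not_lt_zero _), fun i j hij => ?_⟩
  by_contra! h
  have mem_of_ne_zero : ∀ {l : Fin n},
      Finsupp.indicator (pathDominatingSet n) (fun _ _ => 1) l ≠ 0 → l ∈ pathDominatingSet n :=
    fun hl => by_contra fun h' => hl (Finsupp.indicator_of_notMem h' _)
  obtain ⟨j₁, -, hi⟩ := mem_pathDominatingSet.mp (mem_of_ne_zero h.1)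
  obtain ⟨j₂, hj₂, hj⟩ := mem_pathDominatingSet.mp (mem_of_ne_zero h.2)
  have := j.2
  omega

theorem exists_adj_mem_pathDominatingSet {i : Fin n} (hi : i ∉ pathDominatingSet n) :
    ∃ t ∈ pathDominatingSet n, (t : ℕ) = i + 1 ∨ (i : ℕ) = t + 1 := by
  simp only [mem_pathDominatingSet] at hi ⊢
  have := i.2
  have hcase : (i : ℕ) % 3 = 0 ∧ (i : ℕ) + 1 < n ∨ (i : ℕ) % 3 = 2 := by
    by_contra! hc
    exact hi ⟨i / 3, by omega, by omega⟩
  rcases hcase with h | h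
  · exact ⟨⟨i + 1, h.2⟩, ⟨i / 3, by omega, by simp; omega⟩, Or.inl rfl⟩
  · exact ⟨⟨i - 1, by omega⟩, ⟨i / 3, by omega, by simp; omega⟩, Or.inr (by simp; omega)⟩

end PathDominatingSet

theorem exists_card_le_of_isStanleyDecompOf_pathStandard {n : ℕ}
    {D : Finset ((Fin n →₀ ℕ) × Finset (Fin n))} (hD : IsStanleyDecompOf (PathStandard n 0) D) :
    ∃ p ∈ D, p.2.card ≤ (n + 2) / 3 := by
  obtain ⟨p, hp, hsub⟩ := hD.exists_forall_mem_add_single pathStandard_indicator_pathDominatingSet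
  set u : Fin n →₀ ℕ := Finsupp.indicator (pathDominatingSet n) fun _ _ => 1 with hu
  refine ⟨p, hp, (Finset.card_le_card fun i hi => ?_).trans card_pathDominatingSet_le⟩
  by_contra hiT
  obtain ⟨t, ht, hadj⟩ := exists_adj_mem_pathDominatingSet hiT
  have hi_ne : (u + Finsupp.single i 1 : Fin n →₀ ℕ) i ≠ 0 := by simp
  have ht_ne : (u + Finsupp.single i 1 : Fin n →₀ ℕ) t ≠ 0 := by simp [hu, Finsupp.indicator_of_mem ht]
  rcases hadj with h | h
  · exact ((hsub i hi).2 i t h).elim hi_ne ht_ne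
  · exact ((hsub i hi).2 t i h).elim ht_ne hi_ne

theorem pathIdeal_eq_span (K : Type*) [Field K] (n : ℕ) :
    pathIdeal K n n = Ideal.span ((fun s => monomial s (1 : K)) ''
      {s | ∃ i j : Fin n, (j : ℕ) = i + 1 ∧ s = Finsupp.single i 1 + Finsupp.single j 1}) := by
  unfold pathIdeal
  congr 1
  ext p
  simp only [Set.mem_ofPred_eq, Set.mem_image, X, monomial_mul, one_mul]
  constructor
  · rintro ⟨i, j, hij, -, rfl⟩
    exact ⟨_, ⟨i, j, hij, rfl⟩, rfl⟩
  · rintro ⟨_, ⟨i, j, hij, rfl⟩, rfl⟩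
    exact ⟨i, j, hij, by omega, rfl⟩

theorem single_add_single_le_iff {σ : Type*} {a : σ →₀ ℕ} {i j : σ} (h : i ≠ j) :
    Finsupp.single i 1 + Finsupp.single j 1 ≤ a ↔ a i ≠ 0 ∧ a j ≠ 0 := by
  classical
  simp only [Finsupp.le_def, Finsupp.add_apply, Finsupp.single_apply]
  grind

theorem monomial_notMem_pathIdeal_iff {K : Type*} [Field K] {n : ℕ} (a : Fin n →₀ ℕ) :
    monomial a (1 : K) ∉ pathIdeal K n n ↔ PathStandard n 0 a := by
  classical
  rw [pathIdeal_eq_span, mem_ideal_span_monomial_image, support_monomial, if_neg one_ne_zero]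
  simp only [Finset.mem_singleton, forall_eq, Set.mem_ofPred_eq, PathStandard, Nat.not_lt_zero]
  constructor
  · intro h
    refine ⟨fun _ h => h.elim, fun i j hij => ?_⟩
    by_contra! hne
    exact h ⟨_, ⟨i, j, hij, rfl⟩, (single_add_single_le_iff fun h => by subst h; omega).mpr hne⟩
  · rintro ⟨-, h⟩ ⟨_, ⟨i, j, hij, rfl⟩, hle⟩
    have := (single_add_single_le_iff fun h => by subst h; omega).mp hle
    exact (h i j hij).elim this.1 this.2

theorem sdepth_pathIdeal_general {K : Type*} [Field K] (n : ℕ) :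
    (sdepth (pathIdeal K n n) : ℤ) = ⌈(n : ℚ) / 3⌉ := by
  have hceil : ⌈(n : ℚ) / 3⌉ = -(-(n : ℤ) / 3) := by
    exact_mod_cast Rat.ceil_natCast_div_natCast n 3
  have hlower : StanleyDepthAtLeast (PathStandard n 0) ((n + 2) / 3) := by
    simpa using stanleyDepthAtLeast_pathStandard n 0
  rw [sdepth_eq_of_stanleyDepthAtLeast monomial_notMem_pathIdeal_iff hlower
    fun _ => exists_card_le_of_isStanleyDecompOf_pathStandard, hceil]
  omega

/-- For `n ≥ 2` and `I = I(P_n)` the edge ideal of the path `P_n` in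
`S = K[x_1, …, x_n]`, one has `sdepth (S/I) = ⌈n/3⌉`. -/
theorem sdepth_pathIdeal {K : Type*} [Field K] (n : ℕ) (hn : 2 ≤ n) :
    (sdepth (pathIdeal K n n) : ℤ) = ⌈(n : ℚ) / 3⌉ :=
  sdepth_pathIdeal_general n
end

section
/- Let t ≥ 1, let G be a finite simple graph on vertex set {x_1,…,x_n}, let u and v be vertices of G, let I = I(G) be the edge ideal of G in S = K[x_1,…,x_n], and let s ≥ 0 be an integer. If sdepth(S/(I^t : uv)) ≥ s, sdepth(S/(I^t, u)) ≥ s, and sdepth(S/((I^t : u), v)) ≥ s, then sdepth(S/I^t) ≥ s. -/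
/-!
A monomial not in a monomial ideal `J` is either not divisible by `x_u`, and then lies outside
`(J, x_u)`, or it is `x_u m` with `m ∉ (J : x_u)`. So the standard monomials of `S/J` are the
disjoint union of those of `S/(J, x_u)` and the `x_u`-translate of those of `S/(J : x_u)`, and
Stanley decompositions of the two pieces glue to one of `S/J`:
`sdepth (S/J) ≥ min (sdepth (S/(J : x_u))) (sdepth (S/(J, x_u)))`.
Apply this to `J = I(G)ᵗ` at `u`, and then to the monomial ideal `J : x_u` at `v`, using
`((J : x_u) : x_v) = (J : x_u x_v)`.
-/

open MvPolynomial

/-- The edge ideal `I(G)` of a finite simple graph `G` on the vertex set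
`{x_1, …, x_n}`: the ideal of `S = K[x_1, …, x_n]` generated by all monomials
`x_i x_j` such that `{x_i, x_j}` is an edge of `G`. -/
noncomputable def edgeIdeal (K : Type*) [Field K] {n : ℕ} (G : SimpleGraph (Fin n)) :
    Ideal (MvPolynomial (Fin n) K) :=
  Ideal.span {p | ∃ i j : Fin n, G.Adj i j ∧ p = X i * X j}

open Pointwise

theorem Ideal.colon_colon_span_singleton {R : Type*} [CommSemiring R] (I : Ideal R) (x y : R) :
    (I.colon (Ideal.span {x})).colon (Ideal.span {y}) = I.colon (Ideal.span {x * y}) := by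
  ext f
  simp only [Ideal.mem_colon_span_singleton, mul_assoc, mul_comm y]

section MonomialIdeal

variable {σ R : Type*} [CommSemiring R]

def IsMonomialIdeal (I : Ideal (MvPolynomial σ R)) : Prop :=
  ∃ T : Set (σ →₀ ℕ), I = Ideal.span ((fun d => monomial d (1 : R)) '' T)

theorem monomial_mem_colon_span_X_iff (I : Ideal (MvPolynomial σ R)) (u : σ) (a : σ →₀ ℕ) :
    monomial a (1 : R) ∈ I.colon (Ideal.span {X u} : Ideal (MvPolynomial σ R)) ↔
      monomial (a + Finsupp.single u 1) 1 ∈ I := by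
  rw [Ideal.mem_colon_span_singleton, monomial_add_single, pow_one]

theorem monomial_mem_span_monomial_image_iff [Nontrivial R] (T : Set (σ →₀ ℕ)) (a : σ →₀ ℕ) :
    monomial a (1 : R) ∈ Ideal.span ((fun d => monomial d (1 : R)) '' T) ↔ ∃ d ∈ T, d ≤ a := by
  classical
  rw [mem_ideal_span_monomial_image, support_monomial, if_neg one_ne_zero]
  simp

namespace IsMonomialIdeal

variable {I J : Ideal (MvPolynomial σ R)}

theorem top : IsMonomialIdeal (⊤ : Ideal (MvPolynomial σ R)) :=
  ⟨{0}, by simp⟩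

theorem mul (hI : IsMonomialIdeal I) (hJ : IsMonomialIdeal J) : IsMonomialIdeal (I * J) := by
  obtain ⟨A, rfl⟩ := hI
  obtain ⟨B, rfl⟩ := hJ
  refine ⟨A + B, ?_⟩
  rw [Ideal.span_mul_span', ← Set.image2_mul, ← Set.image2_add, Set.image2_image_left,
    Set.image2_image_right, Set.image_image2]
  simp only [monomial_mul, one_mul]

theorem pow (hI : IsMonomialIdeal I) (t : ℕ) : IsMonomialIdeal (I ^ t) := by
  induction t with
  | zero => simpa using top
  | succ t ih => simpa only [pow_succ] using ih.mul hI

theorem monomial_mem_of_mem_support (hI : IsMonomialIdeal I) {f : MvPolynomial σ R}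
    (hf : f ∈ I) {d : σ →₀ ℕ} (hd : d ∈ f.support) : monomial d (1 : R) ∈ I := by
  obtain ⟨T, rfl⟩ := hI
  obtain ⟨e, he, hed⟩ := mem_ideal_span_monomial_image.1 hf d hd
  have hsplit : monomial d (1 : R) = monomial (d - e) 1 * monomial e 1 := by
    rw [monomial_mul, mul_one, tsub_add_cancel_of_le hed]
  exact hsplit ▸ Ideal.mul_mem_left _ _ (Ideal.subset_span ⟨e, he, rfl⟩)

theorem colon_span_X (hI : IsMonomialIdeal I) (u : σ) :
    IsMonomialIdeal (I.colon (Ideal.span {X u} : Ideal (MvPolynomial σ R))) := by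
  refine ⟨{d | monomial d 1 ∈ I.colon (Ideal.span {X u} : Ideal (MvPolynomial σ R))},
    le_antisymm ?_ ?_⟩
  · intro f hf
    refine mem_ideal_span_monomial_image.2 fun d hd => ⟨d, ?_, le_rfl⟩
    rw [Set.mem_ofPred_eq, monomial_mem_colon_span_X_iff]
    refine hI.monomial_mem_of_mem_support (Ideal.mem_colon_span_singleton.1 hf) ?_
    rwa [mem_support_iff, coeff_mul_X, ← mem_support_iff]
  · rw [Ideal.span_le]
    rintro _ ⟨d, hd, rfl⟩
    exact hd

theorem monomial_mem_sup_span_X_iff [Nontrivial R] (hI : IsMonomialIdeal I) (u : σ)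
    (a : σ →₀ ℕ) :
    monomial a (1 : R) ∈ I ⊔ Ideal.span {X u} ↔
      monomial a (1 : R) ∈ I ∨ Finsupp.single u 1 ≤ a := by
  obtain ⟨T, rfl⟩ := hI
  rw [show ({X u} : Set (MvPolynomial σ R)) = (fun d => monomial d 1) '' {Finsupp.single u 1}
      from (Set.image_singleton (f := fun d => monomial d (1 : R))).symm,
    ← Ideal.span_union, ← Set.image_union, monomial_mem_span_monomial_image_iff,
    monomial_mem_span_monomial_image_iff]
  simp [or_comm]

end IsMonomialIdeal

end MonomialIdeal

theorem isMonomialIdeal_edgeIdeal (K : Type*) [Field K] {n : ℕ} (G : SimpleGraph (Fin n)) :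
    IsMonomialIdeal (edgeIdeal K G) := by
  refine ⟨{d | ∃ i j, G.Adj i j ∧ d = Finsupp.single i 1 + Finsupp.single j 1}, ?_⟩
  unfold edgeIdeal
  congr 1
  ext p
  simp [X, monomial_mul, eq_comm]

section StanleyPartition

variable {σ : Type*} [DecidableEq σ] {N N₁ N₂ : Set (σ →₀ ℕ)}
  {D D₁ D₂ : Finset ((σ →₀ ℕ) × Finset σ)}

def IsStanleyPartition (N : Set (σ →₀ ℕ)) (D : Finset ((σ →₀ ℕ) × Finset σ)) : Prop :=
  (∀ p ∈ D, ∀ w : σ →₀ ℕ, w.support ⊆ p.2 → p.1 + w ∈ N) ∧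
  ∀ a ∈ N, ∃! p, p ∈ D ∧ ∃ w : σ →₀ ℕ, w.support ⊆ p.2 ∧ a = p.1 + w

theorem IsStanleyPartition.vadd (hD : IsStanleyPartition N D) (e : σ →₀ ℕ) :
    IsStanleyPartition (e +ᵥ N) (D.image (Prod.map (e + ·) id)) := by
  refine ⟨?_, ?_⟩
  · simp only [Finset.mem_image]
    rintro _ ⟨p, hp, rfl⟩ w hw
    exact ⟨p.1 + w, hD.1 p hp w hw, by simp [add_assoc]⟩
  · rintro _ ⟨a, ha, rfl⟩
    obtain ⟨p, ⟨hp, w, hw, rfl⟩, huniq⟩ := hD.2 a ha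
    refine ⟨Prod.map (e + ·) id p, ⟨Finset.mem_image_of_mem _ hp, w, hw, by simp [add_assoc]⟩, ?_⟩
    rintro _ ⟨hq', w', hw', heq⟩
    obtain ⟨q, hq, rfl⟩ := Finset.mem_image.1 hq'
    have hpq : p.1 + w = q.1 + w' := by simpa [add_assoc] using heq
    rw [huniq q ⟨hq, w', hw', hpq⟩]

theorem IsStanleyPartition.existsUnique_union (h₁ : IsStanleyPartition N₁ D₁)
    (h₂ : IsStanleyPartition N₂ D₂) (hN : Disjoint N₁ N₂) {a : σ →₀ ℕ} (ha : a ∈ N₁) :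
    ∃! p, p ∈ D₁ ∪ D₂ ∧ ∃ w : σ →₀ ℕ, w.support ⊆ p.2 ∧ a = p.1 + w := by
  obtain ⟨p, ⟨hp, hpa⟩, huniq⟩ := h₁.2 a ha
  refine ⟨p, ⟨Finset.mem_union_left _ hp, hpa⟩, ?_⟩
  rintro q ⟨hq, w, hw, rfl⟩
  rcases Finset.mem_union.1 hq with hq | hq
  · exact huniq q ⟨hq, w, hw, rfl⟩
  · exact (Set.disjoint_left.1 hN ha (h₂.1 q hq w hw)).elim

theorem IsStanleyPartition.union (h₁ : IsStanleyPartition N₁ D₁) (h₂ : IsStanleyPartition N₂ D₂)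
    (hN : Disjoint N₁ N₂) : IsStanleyPartition (N₁ ∪ N₂) (D₁ ∪ D₂) := by
  refine ⟨fun p hp w hw => ?_, fun a ha => ?_⟩
  · rcases Finset.mem_union.1 hp with hp | hp
    exacts [Or.inl (h₁.1 p hp w hw), Or.inr (h₂.1 p hp w hw)]
  · rcases ha with ha | ha
    · exact h₁.existsUnique_union h₂ hN ha
    · exact Finset.union_comm D₁ D₂ ▸ h₂.existsUnique_union h₁ hN.symm ha

end StanleyPartition

section StandardExponents

variable {σ R : Type*} [CommSemiring R]

def standardExponents (I : Ideal (MvPolynomial σ R)) : Set (σ →₀ ℕ) :=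
  {a | monomial a (1 : R) ∉ I}

theorem isStanleyDecomp_iff {K : Type*} [Field K] {n : ℕ} {I : Ideal (MvPolynomial (Fin n) K)}
    {D : Finset ((Fin n →₀ ℕ) × Finset (Fin n))} :
    IsStanleyDecomp I D ↔ IsStanleyPartition (standardExponents I) D :=
  Iff.rfl

theorem IsMonomialIdeal.standardExponents_eq [Nontrivial R] {I : Ideal (MvPolynomial σ R)}
    (hI : IsMonomialIdeal I) (u : σ) :
    standardExponents I = standardExponents (I ⊔ Ideal.span {X u}) ∪
      (Finsupp.single u 1 +ᵥ
        standardExponents (I.colon (Ideal.span {X u} : Ideal (MvPolynomial σ R)))) := by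
  ext a
  simp only [standardExponents, Set.mem_union, Set.mem_ofPred_eq, Set.mem_vadd_set,
    hI.monomial_mem_sup_span_X_iff, monomial_mem_colon_span_X_iff, vadd_eq_add]
  by_cases h : Finsupp.single u 1 ≤ a
  · obtain ⟨c, rfl⟩ := exists_add_of_le h
    simp [add_comm]
  · simp only [h, or_false, iff_self_or]
    rintro ⟨c, -, rfl⟩
    exact (h le_self_add).elim

theorem disjoint_standardExponents_sup_span_X (I J : Ideal (MvPolynomial σ R)) (u : σ) :
    Disjoint (standardExponents (I ⊔ Ideal.span {X u}))
      (Finsupp.single u 1 +ᵥ standardExponents J) := by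
  rw [Set.disjoint_left]
  rintro _ ha ⟨c, -, rfl⟩
  refine ha (Ideal.mem_sup_right (Ideal.mem_span_singleton'.2 ⟨monomial c 1, ?_⟩))
  change _ = monomial (Finsupp.single u 1 + c) (1 : R)
  rw [add_comm, monomial_add_single, pow_one]

end StandardExponents

section Sdepth

variable {K : Type*} [Field K] {n : ℕ} {I : Ideal (MvPolynomial (Fin n) K)} {s : ℕ}

theorem le_sdepth_iff (hs : 0 < s) :
    s ≤ sdepth I ↔ ∃ D, IsStanleyDecomp I D ∧ D.Nonempty ∧ ∀ p ∈ D, s ≤ p.2.card := by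
  unfold sdepth
  set S := {s : ℕ | ∃ D, IsStanleyDecomp I D ∧ ∀ p ∈ D, s ≤ p.2.card}
  constructor
  · intro h
    have hbdd : BddAbove S := by
      by_contra hb
      rw [Nat.sSup_of_not_bddAbove hb] at h
      omega
    have hne : S.Nonempty := by
      by_contra he
      rw [Set.not_nonempty_iff_eq_empty.1 he, csSup_empty, Nat.bot_eq_zero] at h
      omega
    obtain ⟨D, hD, hcard⟩ := Nat.sSup_mem hne hbdd
    refine ⟨D, hD, ?_, fun p hp => h.trans (hcard p hp)⟩
    -- the empty decomposition would witness every bound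
    by_contra hD₀
    obtain ⟨b, hb⟩ := hbdd
    have hb₁ : b + 1 ∈ S := ⟨D, hD, by simp [Finset.not_nonempty_iff_eq_empty.1 hD₀]⟩
    exact Nat.not_succ_le_self b (hb hb₁)
  · rintro ⟨D, hD, ⟨p, hp⟩, hcard⟩
    refine le_csSup ⟨n, ?_⟩ ⟨D, hD, hcard⟩
    rintro s' ⟨D', hD', hcard'⟩
    obtain ⟨q, ⟨hq, -⟩, -⟩ := hD'.2 p.1 (by simpa using hD.1 p hp 0 (by simp))
    exact (hcard' q hq).trans (q.2.card_le_univ.trans_eq (Fintype.card_fin n))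

theorem IsMonomialIdeal.le_sdepth_of_colon_of_sup (hI : IsMonomialIdeal I) (u : Fin n)
    (h_colon : s ≤ sdepth (I.colon (Ideal.span {X u} : Ideal (MvPolynomial (Fin n) K))))
    (h_sup : s ≤ sdepth (I ⊔ Ideal.span {X u})) : s ≤ sdepth I := by
  rcases Nat.eq_zero_or_pos s with rfl | hs
  · exact Nat.zero_le _
  obtain ⟨D₁, hD₁, -, hc₁⟩ := (le_sdepth_iff hs).1 h_colon
  obtain ⟨D₂, hD₂, hne₂, hc₂⟩ := (le_sdepth_iff hs).1 h_sup
  refine (le_sdepth_iff hs).2 ⟨D₂ ∪ D₁.image (Prod.map (Finsupp.single u 1 + ·) id), ?_,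
    hne₂.mono Finset.subset_union_left, ?_⟩
  · rw [isStanleyDecomp_iff, hI.standardExponents_eq u]
    exact (isStanleyDecomp_iff.1 hD₂).union (isStanleyDecomp_iff.1 hD₁ |>.vadd _)
      (disjoint_standardExponents_sup_span_X _ _ u)
  · simp only [Finset.mem_union, Finset.mem_image]
    rintro p (hp | ⟨q, hq, rfl⟩)
    exacts [hc₂ p hp, hc₁ q hq]

end Sdepth

theorem sdepth_pow_ge_of_colon_general {K : Type*} [Field K] {n : ℕ} (t : ℕ)
    (G : SimpleGraph (Fin n)) (u v : Fin n) (s : ℕ)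
    (h1 : s ≤ sdepth (((edgeIdeal K G) ^ t).colon (Ideal.span {X u * X v} : Ideal (MvPolynomial (Fin n) K))))
    (h2 : s ≤ sdepth ((edgeIdeal K G) ^ t ⊔ Ideal.span {X u}))
    (h3 : s ≤ sdepth ((((edgeIdeal K G) ^ t).colon (Ideal.span {X u} : Ideal (MvPolynomial (Fin n) K))) ⊔ Ideal.span {X v})) :
    s ≤ sdepth ((edgeIdeal K G) ^ t) := by
  have hJ := (isMonomialIdeal_edgeIdeal K G).pow t
  refine hJ.le_sdepth_of_colon_of_sup u ?_ h2
  refine (hJ.colon_span_X u).le_sdepth_of_colon_of_sup v ?_ h3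
  rwa [Ideal.colon_colon_span_singleton]

/-- Let `t ≥ 1`, `G` a finite simple graph on `{x_1, …, x_n}`, `u, v` vertices of
`G`, `I = I(G)` its edge ideal in `S = K[x_1, …, x_n]` and `s ≥ 0`. If
`sdepth (S/(Iᵗ : uv)) ≥ s`, `sdepth (S/(Iᵗ, u)) ≥ s` and
`sdepth (S/((Iᵗ : u), v)) ≥ s`, then `sdepth (S/Iᵗ) ≥ s`. -/
theorem sdepth_pow_ge_of_colon {K : Type*} [Field K] {n : ℕ} (t : ℕ) (ht : 1 ≤ t)
    (G : SimpleGraph (Fin n)) (u v : Fin n) (s : ℕ)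
    (h1 : s ≤ sdepth (((edgeIdeal K G) ^ t).colon (Ideal.span {X u * X v} : Ideal (MvPolynomial (Fin n) K))))
    (h2 : s ≤ sdepth ((edgeIdeal K G) ^ t ⊔ Ideal.span {X u}))
    (h3 : s ≤ sdepth ((((edgeIdeal K G) ^ t).colon (Ideal.span {X u} : Ideal (MvPolynomial (Fin n) K))) ⊔ Ideal.span {X v})) :
    s ≤ sdepth ((edgeIdeal K G) ^ t) :=
  sdepth_pow_ge_of_colon_general t G u v s h1 h2 h3
end

section
/- Let n ≥ 2, t ≥ 2, K a field, S = K[x_1,…,x_n], and I = I(P_n) the edge ideal of the path P_n. Then (I^t : x_{n−1} x_n) = I^{t−1}. -/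
/-!
Write `a = x_{n-1}`, `b = x_n`. Since `ab ∈ I`, `I^{t-1} ⊆ (I^t : ab)`. Conversely everything is
monomial: if `m·ab` is divisible by a product of `t` edges, one of these edges can be cancelled
against `ab`. If `ab` itself occurs, cancel it. Otherwise no edge contains the leaf `b`, so only
the exponent of `a` can exceed that of `m`, and by at most one; cancel an edge through `a` if there
is one, and any edge if there is none.
-/

open MvPolynomial

open Pointwise Finsupp

theorem Finsupp.exists_sum_le_add_of_forall_eq_or_apply_eq_zero {σ ι : Type*} [Fintype ι]
    [Nonempty ι] {a b : σ} (hab : a ≠ b) {f : ι → σ →₀ ℕ}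
    (hf : ∀ i, f i = single a 1 + single b 1 ∨ f i b = 0) {m : σ →₀ ℕ}
    (hle : ∑ i, f i ≤ m + (single a 1 + single b 1)) :
    ∃ i, ∑ i, f i ≤ m + f i := by
  by_cases hv : ∃ i, f i = single a 1 + single b 1
  · obtain ⟨i, hi⟩ := hv
    exact ⟨i, hi ▸ hle⟩
  push Not at hv
  have hfb (i : ι) : f i b = 0 := (hf i).resolve_left (hv i)
  obtain ⟨i, hi⟩ : ∃ i, ∑ j, f j a ≤ m a + f i a := by
    by_cases ha : ∃ i, f i a ≠ 0
    · obtain ⟨i, hi⟩ := ha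
      have hlea := hle a
      simp only [coe_add, Pi.add_apply, finsetSum_apply, single_eq_same,
        single_eq_of_ne' hab.symm, add_zero] at hlea
      exact ⟨i, by omega⟩
    · push Not at ha
      exact ⟨Classical.arbitrary ι, by simp [ha]⟩
  refine ⟨i, fun x => ?_⟩
  have hx := hle x
  simp only [coe_add, Pi.add_apply, finsetSum_apply] at hx ⊢
  by_cases hxa : x = a
  · exact hxa ▸ hi
  by_cases hxb : x = b
  · simp [hxb, hfb]
  · exact le_add_right (by simpa [single_apply, Ne.symm hxa, Ne.symm hxb] using hx)

theorem Finsupp.exists_mem_nsmul_le_of_forall_eq_or_apply_eq_zero {σ : Type*} {a b : σ}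
    (hab : a ≠ b) {E : Set (σ →₀ ℕ)} (hE : ∀ e ∈ E, e = single a 1 + single b 1 ∨ e b = 0)
    {t : ℕ} {d m : σ →₀ ℕ} (hd : d ∈ (t + 1) • E) (hle : d ≤ m + (single a 1 + single b 1)) :
    ∃ d' ∈ t • E, d' ≤ m := by
  obtain ⟨f, hfE, rfl⟩ := Set.mem_nsmul_iff_sum.mp hd
  obtain ⟨i, hi⟩ :=
    exists_sum_le_add_of_forall_eq_or_apply_eq_zero hab (fun i => hE _ (hfE i)) hle
  rw [Fin.sum_univ_succAbove f i, add_comm] at hi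
  exact ⟨_, Set.mem_nsmul_iff_sum.mpr ⟨_, fun j => hfE _, rfl⟩, le_of_add_le_add_right hi⟩

namespace MvPolynomial

variable {σ R : Type*} [CommSemiring R]

theorem monomial_one_image_nsmul (E : Set (σ →₀ ℕ)) (t : ℕ) :
    (fun d => monomial d (1 : R)) '' (t • E) = ((fun d => monomial d (1 : R)) '' E) ^ t := by
  induction t with
  | zero => simp [Set.singleton_one]
  | succ t ih =>
    rw [succ_nsmul, pow_succ, ← ih, ← Set.image2_add, ← Set.image2_mul, Set.image2_image_left,
      Set.image2_image_right, Set.image_image2]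
    simp only [monomial_mul, one_mul]

theorem span_monomial_one_image_pow (E : Set (σ →₀ ℕ)) (t : ℕ) :
    Ideal.span ((fun d => monomial d (1 : R)) '' E) ^ t =
      Ideal.span ((fun d => monomial d (1 : R)) '' (t • E)) := by
  rw [monomial_one_image_nsmul]
  exact Submodule.span_pow _ t

theorem span_monomial_one_image_colon_le {D D' : Set (σ →₀ ℕ)} {u : σ →₀ ℕ}
    (h : ∀ d ∈ D, ∀ m, d ≤ m + u → ∃ d' ∈ D', d' ≤ m) :
    (Ideal.span ((fun d => monomial d (1 : R)) '' D)).colon {monomial u 1} ≤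
      Ideal.span ((fun d => monomial d (1 : R)) '' D') := by
  intro f hf
  rw [Submodule.mem_colon_singleton, smul_eq_mul, mem_ideal_span_monomial_image] at hf
  rw [mem_ideal_span_monomial_image]
  intro m hm
  have hmu : m + u ∈ (f * monomial u 1).support := by
    rwa [mem_support_iff, coeff_mul_monomial, mul_one, ← mem_support_iff]
  obtain ⟨d, hd, hle⟩ := hf _ hmu
  exact h d hd m hle

/-- In graph language: `b` is a leaf of the graph with edge set `E`, attached to `a`. -/
theorem span_monomial_one_image_pow_succ_colon_eq {a b : σ} (hab : a ≠ b) {E : Set (σ →₀ ℕ)}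
    (hv : single a 1 + single b 1 ∈ E) (hE : ∀ e ∈ E, e = single a 1 + single b 1 ∨ e b = 0)
    (t : ℕ) :
    (Ideal.span ((fun d => monomial d (1 : R)) '' E) ^ (t + 1)).colon
        {monomial (single a 1 + single b 1) 1} =
      Ideal.span ((fun d => monomial d (1 : R)) '' E) ^ t := by
  apply le_antisymm
  · rw [span_monomial_one_image_pow, span_monomial_one_image_pow]
    exact span_monomial_one_image_colon_le fun d hd m hle =>
      exists_mem_nsmul_le_of_forall_eq_or_apply_eq_zero hab hE hd hle
  · intro f hf
    rw [Submodule.mem_colon_singleton, smul_eq_mul, pow_succ]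
    exact Ideal.mul_mem_mul hf (Ideal.subset_span ⟨_, hv, rfl⟩)

end MvPolynomial

def pathEdgeExponents (n m : ℕ) : Set (Fin n →₀ ℕ) :=
  {e | ∃ i j : Fin n, (j : ℕ) = (i : ℕ) + 1 ∧ (i : ℕ) + 2 ≤ m ∧ e = single i 1 + single j 1}

theorem pathIdeal_eq_span_monomial (K : Type*) [Field K] (n m : ℕ) :
    pathIdeal K n m = Ideal.span ((fun d => monomial d (1 : K)) '' pathEdgeExponents n m) := by
  unfold pathIdeal pathEdgeExponents
  congr 1
  ext p
  simp [X, monomial_mul, and_assoc, eq_comm]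

theorem pathEdgeExponents_eq_or_apply_eq_zero {n m : ℕ} {a b : Fin n} (hab : (b : ℕ) = a + 1)
    (hb : (b : ℕ) + 1 = n) :
    ∀ e ∈ pathEdgeExponents n m, e = single a 1 + single b 1 ∨ e b = 0 := by
  rintro _ ⟨i, j, hij, -, rfl⟩
  by_cases hj : j = b
  · left
    have hi : i = a := Fin.ext (by have := congrArg Fin.val hj; omega)
    rw [hi, hj]
  · right
    have hi : i ≠ b := fun h => by have := congrArg Fin.val h; omega
    simp [hi, hj]

/-- For `n ≥ 2`, `t ≥ 2` and `I = I(P_n)` the edge ideal of the path `P_n` in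
`S = K[x_1, …, x_n]`, one has `(Iᵗ : x_{n-1} x_n) = I ^ (t - 1)`. -/
theorem pathIdeal_pow_colon_edge {K : Type*} [Field K] (n t : ℕ) (hn : 2 ≤ n) (ht : 2 ≤ t) :
    ((pathIdeal K n n) ^ t).colon
        ((Ideal.span {X (⟨n - 2, by omega⟩ : Fin n) * X (⟨n - 1, by omega⟩ : Fin n)} :
          Ideal (MvPolynomial (Fin n) K)) : Set (MvPolynomial (Fin n) K)) =
      (pathIdeal K n n) ^ (t - 1) := by
  obtain ⟨s, rfl⟩ : ∃ s, t = s + 1 := ⟨t - 1, by omega⟩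
  set a : Fin n := ⟨n - 2, by omega⟩
  set b : Fin n := ⟨n - 1, by omega⟩
  have hab : (b : ℕ) = a + 1 := by simp only [a, b]; omega
  have hb : (b : ℕ) + 1 = n := by simp only [b]; omega
  have hv : single a 1 + single b 1 ∈ pathEdgeExponents n n :=
    ⟨a, b, hab, by simp only [a]; omega, rfl⟩
  rw [Ideal.colon_span, X, X, monomial_mul, one_mul, pathIdeal_eq_span_monomial,
    Nat.add_sub_cancel]
  exact span_monomial_one_image_pow_succ_colon_eq (Fin.ne_of_val_ne (by omega)) hv
    (pathEdgeExponents_eq_or_apply_eq_zero hab hb) s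
end

section
/- Let n ≥ 3, t ≥ 1, K a field, S = K[x_1,…,x_n], I = I(P_n) the edge ideal of the path P_n, and L = I(P_{n−1}) the edge ideal of the path P_{n−1} on x_1,…,x_{n−1}, regarded as an ideal of S. Then ((I^t : x_{n−1}), x_n) = ((L^t : x_{n−1}), x_n). -/
open MvPolynomial

/-!
Let `φ` be the substitution `x_n ↦ 0`. Every `f` is congruent to `φ f` modulo `x_n`, and `φ`
fixes `x_{n-1}` and sends `I(P_n)` into `I(P_{n-1})`, since it kills the only extra edge
`x_{n-1} x_n`. Hence `f x_{n-1} ∈ Iᵗ` gives `φ f · x_{n-1} ∈ Lᵗ`,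
i.e. `f ∈ (Lᵗ : x_{n-1}) + (x_n)`.
The reverse inclusion is `L ⊆ I`.
-/

namespace MvPolynomial

variable {σ R : Type*} [CommRing R] [DecidableEq σ]

theorem sub_aeval_update_zero_mem_span (b : σ) (f : MvPolynomial σ R) :
    f - aeval (Function.update X b 0) f ∈ Ideal.span {X b} := by
  have hmk : (Ideal.Quotient.mkₐ R (Ideal.span {X b})).comp (aeval (Function.update X b 0)) =
      Ideal.Quotient.mkₐ R (Ideal.span {(X b : MvPolynomial σ R)}) := by
    refine algHom_ext fun i => ?_
    by_cases hi : i = b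
    · simp [hi]
    · simp [Function.update_of_ne hi]
  rw [← Ideal.Quotient.eq, ← Ideal.Quotient.mkₐ_eq_mk R, ← AlgHom.comp_apply, hmk]

theorem colon_span_X_le_sup_of_map_aeval_update_zero_le {I L : Ideal (MvPolynomial σ R)}
    {a b : σ} (hab : a ≠ b) (hIL : I.map (aeval (Function.update X b 0)) ≤ L) :
    I.colon ((Ideal.span {X a} : Ideal (MvPolynomial σ R)) : Set (MvPolynomial σ R)) ≤
      L.colon ((Ideal.span {X a} : Ideal (MvPolynomial σ R)) : Set (MvPolynomial σ R)) ⊔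
        Ideal.span {X b} := by
  intro f hf
  rw [Ideal.mem_colon_span_singleton] at hf
  have hφf : aeval (Function.update X b 0) f * X a ∈ L := by
    simpa [Function.update_of_ne hab] using hIL (Ideal.mem_map_of_mem _ hf)
  rw [← add_sub_cancel (aeval (Function.update X b 0) f) f]
  exact Submodule.add_mem_sup (Ideal.mem_colon_span_singleton.mpr hφf)
    (sub_aeval_update_zero_mem_span b f)

end MvPolynomial

section PathIdeal

variable {K : Type*} [Field K]

theorem pathIdeal_mono {n m m' : ℕ} (h : m ≤ m') : pathIdeal K n m ≤ pathIdeal K n m' :=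
  Ideal.span_mono fun _ ⟨i, j, hij, hi, hp⟩ => ⟨i, j, hij, hi.trans h, hp⟩

theorem map_aeval_update_zero_pathIdeal_le {n m : ℕ} (b : Fin n) (hm : m ≤ b + 2) :
    (pathIdeal K n m).map (aeval (Function.update X b 0)) ≤ pathIdeal K n b := by
  rw [pathIdeal, Ideal.map_span, Ideal.span_le]
  rintro _ ⟨_, ⟨i, j, hij, hi, rfl⟩, rfl⟩
  by_cases hib : i = b
  · simp [hib]
  by_cases hjb : j = b
  · simp [hjb]
  have hb : (i : ℕ) + 2 ≤ b := by
    have := Fin.val_ne_of_ne hib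
    have := Fin.val_ne_of_ne hjb
    omega
  rw [map_mul, aeval_X, aeval_X, Function.update_of_ne hib, Function.update_of_ne hjb]
  exact Ideal.subset_span ⟨i, j, hij, hb, rfl⟩

end PathIdeal

/-- For `n ≥ 3`, `t ≥ 1`, `I = I(P_n)` and `L = I(P_{n-1})` (both regarded as
ideals of `S = K[x_1, …, x_n]`), one has
`((Iᵗ : x_{n-1}), x_n) = ((Lᵗ : x_{n-1}), x_n)`. -/
theorem pathIdeal_pow_colon_sup {K : Type*} [Field K] (n t : ℕ) (hn : 3 ≤ n) :
    (((pathIdeal K n n) ^ t).colon ((Ideal.span {X (⟨n - 2, by omega⟩ : Fin n)} : Ideal (MvPolynomial (Fin n) K)) : Set (MvPolynomial (Fin n) K))) ⊔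
        Ideal.span {X (⟨n - 1, by omega⟩ : Fin n)} =
      (((pathIdeal K n (n - 1)) ^ t).colon ((Ideal.span {X (⟨n - 2, by omega⟩ : Fin n)} : Ideal (MvPolynomial (Fin n) K)) : Set (MvPolynomial (Fin n) K))) ⊔
        Ideal.span {X (⟨n - 1, by omega⟩ : Fin n)} := by
  have hab : (⟨n - 2, by omega⟩ : Fin n) ≠ ⟨n - 1, by omega⟩ :=
    Fin.ne_of_val_ne (by dsimp only; omega)
  have hmap : ((pathIdeal K n n) ^ t).map (aeval (Function.update X ⟨n - 1, by omega⟩ 0)) ≤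
      (pathIdeal K n (n - 1)) ^ t := by
    rw [Ideal.map_pow]
    exact pow_le_pow_left' (map_aeval_update_zero_pathIdeal_le _ (by dsimp only; omega)) t
  apply le_antisymm
  · exact sup_le (colon_span_X_le_sup_of_map_aeval_update_zero_le hab hmap) le_sup_right
  · exact sup_le_sup_right
      (Submodule.colon_mono (pow_le_pow_left' (pathIdeal_mono (Nat.sub_le n 1)) t) le_rfl) _
end

section
/- Let n ≥ 2 and t ≥ 1 be integers, K a field, S = K[x_1,…,x_n], and I = I(P_n) the edge ideal of the path P_n. Then sdepth(S/I^t) ≥ max{⌈(n−t+1)/3⌉, 1}. -/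
open MvPolynomial

/-!
Peel off the last two vertices `xₘ, xₘ₊₁` of the path `P_{m+2}`. A standard monomial of
`S/I(P_{m+2})ᵗ` not divisible by `xₘ` is a standard monomial of `S/I(P_m)ᵗ` times an arbitrary
power of the free variable `xₘ₊₁`. The others split on `xₘ₊₁`: dividing by `xₘ` gives the
standard monomials of `S/(I(P_{m+1})ᵗ : xₘ)`, dividing by the edge `xₘ xₘ₊₁` those of
`S/I(P_{m+2})ᵗ⁻¹`, because `xₘ₊₁` is a leaf and hence `I(P_{m+2})ᵗ : xₘ xₘ₊₁ = I(P_{m+2})ᵗ⁻¹`.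
The colon module `S/(I(P_{m+2})ᵗ : xₘ₊₁)` splits in the same way on `xₘ`. Gluing Stanley
decompositions of the pieces, an induction on `t` and then on `n` produces Stanley spaces of
dimension at least `⌈(n - t + 1)/3⌉`, and at least `1` once `n ≥ 1`.
-/

namespace Finsupp

theorem exists_eq_add_single_one {ι : Type*} {e : ι →₀ ℕ} {i : ι} (h : e i ≠ 0) :
    ∃ e', e = e' + single i 1 :=
  ⟨e - single i 1, (tsub_add_cancel_of_le (single_le_iff.2 (Nat.one_le_iff_ne_zero.2 h))).symm⟩

theorem exists_embDomain_eq_of_le {ι κ : Type*} {f : ι ↪ κ} {w : κ →₀ ℕ}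
    {b : ι →₀ ℕ} (h : w ≤ b.embDomain f) : ∃ c : ι →₀ ℕ, c.embDomain f = w :=
  ⟨_, embDomain_comapDomain fun x hx => by
    obtain ⟨y, -, rfl⟩ := Finset.mem_map.1 (support_embDomain f b ▸ support_mono h hx)
    exact Set.mem_range_self y⟩

end Finsupp

namespace PathIdeal

open Finsupp

section StanleyPartition

variable {σ τ : Type*}

/-- A Stanley decomposition, as in `IsStanleyDecomp`, of the span of the monomials `x ^ a` with
`F a`, all of whose Stanley spaces have dimension at least `d`. -/
def HasStanleyPartition (F : (σ →₀ ℕ) → Prop) (d : ℕ) : Prop :=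
  ∃ D : Finset ((σ →₀ ℕ) × Finset σ), (∀ p ∈ D, d ≤ p.2.card) ∧
    (∀ p ∈ D, ∀ v : σ →₀ ℕ, v.support ⊆ p.2 → F (p.1 + v)) ∧
    ∀ a, F a → ∃! p, p ∈ D ∧ ∃ v : σ →₀ ℕ, v.support ⊆ p.2 ∧ a = p.1 + v

namespace HasStanleyPartition

variable {F G H : (σ →₀ ℕ) → Prop} {d d' : ℕ}

theorem mono (h : HasStanleyPartition F d) (hd : d' ≤ d) : HasStanleyPartition F d' := by
  obtain ⟨D, hcard, hmem, hcover⟩ := h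
  exact ⟨D, fun p hp => hd.trans (hcard p hp), hmem, hcover⟩

theorem of_iff (h : HasStanleyPartition F d) (hFG : ∀ a, F a ↔ G a) :
    HasStanleyPartition G d := by
  rwa [show G = F from funext fun a => propext (hFG a).symm]

theorem of_forall_not (hF : ∀ a, ¬ F a) (d : ℕ) : HasStanleyPartition F d :=
  ⟨∅, by simp, by simp, fun a ha => (hF a ha).elim⟩

theorem union (hG : HasStanleyPartition G d) (hH : HasStanleyPartition H d)
    (hGH : ∀ a, G a → ¬ H a) : HasStanleyPartition (fun a => G a ∨ H a) d := by
  classical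
  obtain ⟨DG, hcardG, hmemG, hcoverG⟩ := hG
  obtain ⟨DH, hcardH, hmemH, hcoverH⟩ := hH
  refine ⟨DG ∪ DH, ?_, ?_, ?_⟩
  · simp only [Finset.mem_union]
    rintro p (hp | hp)
    exacts [hcardG p hp, hcardH p hp]
  · simp only [Finset.mem_union]
    rintro p (hp | hp) v hv
    exacts [Or.inl (hmemG p hp v hv), Or.inr (hmemH p hp v hv)]
  · rintro a (ha | ha)
    · obtain ⟨p, ⟨hp, hpa⟩, huniq⟩ := hcoverG a ha
      refine ⟨p, ⟨Finset.mem_union_left _ hp, hpa⟩, ?_⟩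
      rintro q ⟨hq, w, hw, rfl⟩
      rcases Finset.mem_union.1 hq with hq | hq
      · exact huniq q ⟨hq, w, hw, rfl⟩
      · exact (hGH _ ha (hmemH q hq w hw)).elim
    · obtain ⟨p, ⟨hp, hpa⟩, huniq⟩ := hcoverH a ha
      refine ⟨p, ⟨Finset.mem_union_right _ hp, hpa⟩, ?_⟩
      rintro q ⟨hq, w, hw, rfl⟩
      rcases Finset.mem_union.1 hq with hq | hq
      · exact (hGH _ (hmemG q hq w hw) ha).elim
      · exact huniq q ⟨hq, w, hw, rfl⟩

theorem translate (h : HasStanleyPartition F d) (u : σ →₀ ℕ) :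
    HasStanleyPartition (fun a => u ≤ a ∧ F (a - u)) d := by
  classical
  obtain ⟨D, hcard, hmem, hcover⟩ := h
  refine ⟨D.image fun p => (u + p.1, p.2), ?_, ?_, ?_⟩
  · simp only [Finset.mem_image]
    rintro _ ⟨p, hp, rfl⟩
    exact hcard p hp
  · simp only [Finset.mem_image]
    rintro _ ⟨p, hp, rfl⟩ v hv
    rw [add_assoc, add_tsub_cancel_left]
    exact ⟨le_self_add, hmem p hp v hv⟩
  · rintro a ⟨hua, ha⟩
    obtain ⟨p, ⟨hp, v, hv, hav⟩, huniq⟩ := hcover _ ha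
    refine ⟨(u + p.1, p.2), ⟨Finset.mem_image_of_mem _ hp, v, hv, ?_⟩, ?_⟩
    · rw [add_assoc, ← hav, add_tsub_cancel_of_le hua]
    · simp only [Finset.mem_image]
      rintro _ ⟨⟨r, hr, rfl⟩, w, hw, haw⟩
      rw [huniq r ⟨hr, w, hw, by rw [haw, add_assoc, add_tsub_cancel_left]⟩]

theorem of_split (j : σ) (h0 : HasStanleyPartition (fun a => F a ∧ a j = 0) d)
    (h1 : HasStanleyPartition (fun a => F (a + single j 1)) d) : HasStanleyPartition F d := by
  refine (h0.union (h1.translate (single j 1)) ?_).of_iff fun a => ?_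
  · rintro a ⟨-, ha⟩ ⟨hja, -⟩
    simp [single_le_iff, ha] at hja
  · rcases eq_or_ne (a j) 0 with ha | ha
    · simp [ha, single_le_iff]
    · have hja : single j 1 ≤ a := single_le_iff.2 (Nat.one_le_iff_ne_zero.2 ha)
      simp [ha, hja, tsub_add_cancel_of_le hja]

theorem comp_erase {j : σ} (hj : ∀ a, F a → a j = 0) (h : HasStanleyPartition F d) :
    HasStanleyPartition (fun a => F (a.erase j)) (d + 1) := by
  classical
  obtain ⟨D, hcard, hmem, hcover⟩ := h
  have hjD : ∀ p ∈ D, j ∉ p.2 := fun p hp hj' => by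
    simpa using hj _ (hmem p hp (single j 1) (by simpa using hj'))
  have herase : ∀ p ∈ D, ∀ w : σ →₀ ℕ, (p.1 + w).erase j = p.1 + w.erase j := fun p hp w => by
    rw [erase_add, erase_of_notMem_support]
    simpa using hj _ (by simpa using hmem p hp 0 (by simp))
  have hsupp : ∀ p ∈ D, ∀ w : σ →₀ ℕ, w.support ⊆ insert j p.2 → (w.erase j).support ⊆ p.2 :=
    fun p hp w hw => by rwa [support_erase, ← Finset.subset_insert_iff]
  refine ⟨D.image fun p => (p.1, insert j p.2), ?_, ?_, ?_⟩
  · simp only [Finset.mem_image]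
    rintro _ ⟨p, hp, rfl⟩
    rw [Finset.card_insert_of_notMem (hjD p hp)]
    exact Nat.add_le_add_right (hcard p hp) 1
  · simp only [Finset.mem_image]
    rintro _ ⟨p, hp, rfl⟩ v hv
    rw [herase p hp]
    exact hmem p hp _ (hsupp p hp v hv)
  · intro a ha
    obtain ⟨p, ⟨hp, v, hv, hav⟩, huniq⟩ := hcover _ ha
    refine ⟨(p.1, insert j p.2), ⟨Finset.mem_image_of_mem _ hp, v + single j (a j), ?_, ?_⟩, ?_⟩
    · refine support_add.trans (Finset.union_subset (hv.trans (Finset.subset_insert _ _)) ?_)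
      exact support_single_subset.trans (by simp)
    · rw [← add_assoc, ← hav, erase_add_single]
    · simp only [Finset.mem_image]
      rintro _ ⟨⟨r, hr, rfl⟩, w, hw, haw⟩
      rw [huniq r ⟨hr, w.erase j, hsupp r hr w hw, by rw [haw, herase r hr]⟩]

theorem comp_embDomain (ι : τ ↪ σ) (hF : ∀ a, F a → ↑a.support ⊆ Set.range ι)
    (h : HasStanleyPartition F d) : HasStanleyPartition (fun b => F (b.embDomain ι)) d := by
  classical
  obtain ⟨D, hcard, hmem, hcover⟩ := h
  have hp1 : ∀ p ∈ D, (p.1.comapDomain ι ι.injective.injOn).embDomain ι = p.1 := fun p hp =>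
    embDomain_comapDomain (hF _ (by simpa using hmem p hp 0 (by simp)))
  have hp2 : ∀ p ∈ D, ↑p.2 ⊆ Set.range ι := fun p hp z hz =>
    hF _ (hmem p hp (single z 1) (by simpa using hz)) (by simp)
  have hsupp : ∀ (s : Finset σ) (v : τ →₀ ℕ),
      (v.embDomain ι).support ⊆ s ↔ v.support ⊆ s.preimage ι ι.injective.injOn := fun s v => by
    simp [Finset.subset_iff, support_embDomain]
  refine ⟨D.image fun p => (p.1.comapDomain ι ι.injective.injOn, p.2.preimage ι ι.injective.injOn),
    ?_, ?_, ?_⟩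
  · simp only [Finset.mem_image]
    rintro _ ⟨p, hp, rfl⟩
    rw [Finset.card_preimage, Finset.filter_true_of_mem fun z hz => hp2 p hp hz]
    exact hcard p hp
  · simp only [Finset.mem_image]
    rintro _ ⟨p, hp, rfl⟩ v hv
    rw [embDomain_add, hp1 p hp]
    exact hmem p hp _ ((hsupp _ _).2 hv)
  · intro b hb
    obtain ⟨p, ⟨hp, w, hw, hbw⟩, huniq⟩ := hcover _ hb
    have hw' : (w.comapDomain ι ι.injective.injOn).embDomain ι = w :=
      embDomain_comapDomain ((Finset.coe_subset.2 hw).trans (hp2 p hp))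
    refine ⟨_, ⟨Finset.mem_image_of_mem _ hp, w.comapDomain ι ι.injective.injOn, ?_, ?_⟩, ?_⟩
    · rw [← hsupp, hw']
      exact hw
    · apply embDomain_injective ι
      rw [embDomain_add, hp1 p hp, hw', hbw]
    · simp only [Finset.mem_image]
      rintro _ ⟨⟨r, hr, rfl⟩, v, hv, rfl⟩
      rw [huniq r ⟨hr, v.embDomain ι, (hsupp _ _).2 hv, by rw [embDomain_add, hp1 r hr]⟩]

end HasStanleyPartition

theorem hasStanleyPartition_support_subset (s : Finset σ) :
    HasStanleyPartition (fun a : σ →₀ ℕ => a.support ⊆ s) s.card := by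
  refine ⟨{(0, s)}, by simp, by simp, fun a ha => ⟨(0, s), ⟨by simp, a, ha, by simp⟩, ?_⟩⟩
  rintro p ⟨hp, -⟩
  exact Finset.mem_singleton.1 hp

theorem le_sdepth_of_hasStanleyPartition {K : Type*} [Field K] {n d : ℕ}
    {I : Ideal (MvPolynomial (Fin n) K)} (hI : I ≠ ⊤)
    (h : HasStanleyPartition (fun a => monomial a (1 : K) ∉ I) d) :
    d ≤ sdepth I := by
  obtain ⟨D, hcard, hmem, hcover⟩ := h
  refine le_csSup ⟨n, ?_⟩ ⟨D, ⟨hmem, hcover⟩, hcard⟩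
  rintro s ⟨D', hD', hs⟩
  have hone : monomial 0 (1 : K) ∉ I := by
    rwa [monomial_zero', map_one, ← Ideal.ne_top_iff_one]
  obtain ⟨p, ⟨hp, -⟩, -⟩ := hD'.2 0 hone
  simpa using (hs p hp).trans (Finset.card_le_univ p.2)

end StanleyPartition

section PathPower

noncomputable def edge (i : ℕ) : ℕ →₀ ℕ := single i 1 + single (i + 1) 1

/-- The exponent vector of `∏ᵢ (xᵢ xᵢ₊₁) ^ e i`. -/
noncomputable def edgeSum (e : ℕ →₀ ℕ) : ℕ →₀ ℕ := e + e.mapDomain (· + 1)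

theorem edgeSum_add (e f : ℕ →₀ ℕ) : edgeSum (e + f) = edgeSum e + edgeSum f := by
  simp only [edgeSum, mapDomain_add]
  abel

theorem edgeSum_single_one (i : ℕ) : edgeSum (single i 1) = edge i := by
  simp [edgeSum, edge, mapDomain_single]

theorem edgeSum_zero : edgeSum 0 = 0 := by
  simp [edgeSum]

theorem edgeSum_apply_zero (e : ℕ →₀ ℕ) : edgeSum e 0 = e 0 := by
  simp [edgeSum, mapDomain_of_notMem_range]

theorem edgeSum_apply_succ (e : ℕ →₀ ℕ) (v : ℕ) : edgeSum e (v + 1) = e (v + 1) + e v := by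
  simp [edgeSum, mapDomain_apply (add_left_injective 1)]

theorem le_edgeSum (e : ℕ →₀ ℕ) : e ≤ edgeSum e := le_self_add

theorem edgeSum_mono {e f : ℕ →₀ ℕ} (h : e ≤ f) : edgeSum e ≤ edgeSum f := by
  rw [← add_tsub_cancel_of_le h, edgeSum_add]
  exact le_self_add

/-- `MemPathPow m t a` says that `x ^ a ∈ I(P_m) ^ t`: some product of `t` edges of `P_m`,
taken `e i` times the edge `xᵢ xᵢ₊₁`, divides `x ^ a`. -/
def MemPathPow (m t : ℕ) (a : ℕ →₀ ℕ) : Prop :=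
  ∃ e : ℕ →₀ ℕ, (∀ i ∈ e.support, i + 2 ≤ m) ∧ degree e = t ∧ edgeSum e ≤ a

theorem memPathPow_zero (m : ℕ) (a : ℕ →₀ ℕ) : MemPathPow m 0 a :=
  ⟨0, by simp, map_zero _, by simp [edgeSum_zero]⟩

theorem not_memPathPow_of_le_one {m : ℕ} (hm : m ≤ 1) (t : ℕ) (a : ℕ →₀ ℕ) :
    ¬ MemPathPow m (t + 1) a := by
  rintro ⟨e, he, hdeg, -⟩
  have : e = 0 := support_eq_empty.1 (Finset.eq_empty_of_forall_notMem fun i hi => by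
    have := he i hi; omega)
  simp [this] at hdeg

theorem not_memPathPow_zero (m t : ℕ) : ¬ MemPathPow m (t + 1) 0 := by
  rintro ⟨e, -, hdeg, hle⟩
  simp [nonpos_iff_eq_zero.1 ((le_edgeSum e).trans hle)] at hdeg

theorem MemPathPow.mono_left {m m' t : ℕ} {a : ℕ →₀ ℕ} (h : MemPathPow m t a) (hm : m ≤ m') :
    MemPathPow m' t a := by
  obtain ⟨e, he, hdeg, hle⟩ := h
  exact ⟨e, fun i hi => (he i hi).trans hm, hdeg, hle⟩

theorem memPathPow_congr {m t : ℕ} {a b : ℕ →₀ ℕ} (h : ∀ v < m, a v = b v) :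
    MemPathPow m t a ↔ MemPathPow m t b := by
  suffices ∀ a b : ℕ →₀ ℕ, (∀ v < m, a v = b v) → MemPathPow m t a → MemPathPow m t b from
    ⟨this a b h, this b a fun v hv => (h v hv).symm⟩
  rintro a b h ⟨e, he, hdeg, hle⟩
  refine ⟨e, he, hdeg, fun v => ?_⟩
  by_cases hv : v < m
  · exact h v hv ▸ hle v
  · suffices edgeSum e v = 0 by simp [this]
    have hzero : ∀ i, m ≤ i + 1 → e i = 0 := fun i hi => by
      by_contra hei
      have := he i (Finsupp.mem_support_iff.2 hei)
      omega
    rcases v with _ | v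
    · rw [edgeSum_apply_zero, hzero 0 (by omega)]
    · rw [edgeSum_apply_succ, hzero (v + 1) (by omega), hzero v (by omega)]

/-- A vertex with exponent `0` blocks both edges through it. -/
theorem MemPathPow.of_apply_eq_zero {m t : ℕ} {a : ℕ →₀ ℕ} (h : MemPathPow (m + 2) t a)
    (ha : a m = 0) : MemPathPow m t a := by
  obtain ⟨e, he, hdeg, hle⟩ := h
  refine ⟨e, fun i hi => ?_, hdeg, hle⟩
  have hei : e i ≠ 0 := Finsupp.mem_support_iff.1 hi
  have h1 : e i ≤ a i := (le_edgeSum e i).trans (hle i)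
  have h2 : e i ≤ a (i + 1) := (le_add_self.trans_eq (edgeSum_apply_succ e i).symm).trans (hle _)
  have := he i hi
  by_contra
  obtain rfl | rfl : i = m ∨ i + 1 = m := by omega
  exacts [hei (Nat.le_zero.1 (ha ▸ h1)), hei (Nat.le_zero.1 (ha ▸ h2))]

theorem memPathPow_of_le_add_edge {m t : ℕ} {a e : ℕ →₀ ℕ} (he : ∀ j ∈ e.support, j + 2 ≤ m)
    (hdeg : degree e = t + 1) {i : ℕ} (hi : e i ≠ 0) (hle : edgeSum e ≤ a + edge i) :
    MemPathPow m t a := by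
  obtain ⟨e, rfl⟩ := exists_eq_add_single_one hi
  refine ⟨e, fun j hj => he j ?_, ?_, ?_⟩
  · simp only [Finsupp.mem_support_iff, Finsupp.add_apply] at hj ⊢
    omega
  · simpa [degree_single] using hdeg
  · rw [edgeSum_add, edgeSum_single_one] at hle
    exact le_of_add_le_add_right hle

theorem memPathPow_add_edge_iff {m t : ℕ} {a : ℕ →₀ ℕ} :
    MemPathPow (m + 2) (t + 1) (a + edge m) ↔ MemPathPow (m + 2) t a := by
  constructor
  · rintro ⟨e, he, hdeg, hle⟩
    rcases ne_or_eq (e m) 0 with hem | hem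
    · exact memPathPow_of_le_add_edge he hdeg hem hle
    have hem1 : e (m + 1) = 0 := by
      by_contra h
      have := he _ (Finsupp.mem_support_iff.2 h)
      omega
    have hle_of_ne : ∀ v ≠ m, edgeSum e v ≤ a v := fun v hv => by
      rcases eq_or_ne v (m + 1) with rfl | hv1
      · simp [edgeSum_apply_succ, hem, hem1]
      · simpa [edge, single_apply, hv.symm, hv1.symm] using hle v
    by_cases ham : edgeSum e m ≤ a m
    · have hea : edgeSum e ≤ a := fun v => by
        rcases eq_or_ne v m with rfl | hv
        exacts [ham, hle_of_ne v hv]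
      obtain ⟨i, hi⟩ : ∃ i, e i ≠ 0 := by
        by_contra! h
        simp [show e = 0 from Finsupp.ext h] at hdeg
      exact memPathPow_of_le_add_edge he hdeg hi (hea.trans le_self_add)
    -- the surplus at `xₘ` comes from the edge `xₘ₋₁ xₘ`, which we remove instead
    obtain ⟨k, rfl⟩ : ∃ k, m = k + 1 := by
      rcases m with _ | k
      · simp [edgeSum_apply_zero, hem] at ham
      · exact ⟨k, rfl⟩
    have hek : e k ≤ a (k + 1) + 1 := by simpa [edgeSum_apply_succ, hem, edge] using hle (k + 1)
    rw [edgeSum_apply_succ, hem, zero_add, not_le] at ham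
    refine memPathPow_of_le_add_edge he hdeg (i := k) (by omega) fun v => ?_
    rcases eq_or_ne v (k + 1) with rfl | hv
    · simpa [edgeSum_apply_succ, hem, edge] using hek
    · exact (hle_of_ne v hv).trans le_self_add
  · rintro ⟨e, he, hdeg, hle⟩
    refine ⟨e + single m 1, fun i hi => ?_, by simp [hdeg, degree_single], ?_⟩
    · rcases eq_or_ne i m with rfl | him
      · omega
      · exact he i (by simpa [single_apply, Ne.symm him] using hi)
    · rw [edgeSum_add, edgeSum_single_one]
      gcongr

end PathPower

section Standard

def IsStandard (n t : ℕ) (a : ℕ →₀ ℕ) : Prop :=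
  a.support ⊆ Finset.range n ∧ ¬ MemPathPow n t a

theorem support_subset_range_iff {a : ℕ →₀ ℕ} {n : ℕ} :
    a.support ⊆ Finset.range n ↔ ∀ v, n ≤ v → a v = 0 := by
  simp only [Finset.subset_iff, Finsupp.mem_support_iff, Finset.mem_range]
  exact forall_congr' fun v => by omega

theorem not_isStandard_zero (n : ℕ) (a : ℕ →₀ ℕ) : ¬ IsStandard n 0 a :=
  fun h => h.2 (memPathPow_zero n a)

theorem isStandard_iff_of_le_one {n : ℕ} (hn : n ≤ 1) (t : ℕ) (a : ℕ →₀ ℕ) :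
    IsStandard n (t + 1) a ↔ a.support ⊆ Finset.range n :=
  and_iff_left (not_memPathPow_of_le_one hn t a)

theorem isStandard_erase_iff {m t : ℕ} {a : ℕ →₀ ℕ} :
    IsStandard m t (a.erase (m + 1)) ↔ IsStandard (m + 2) t a ∧ a m = 0 := by
  have hsupp : (a.erase (m + 1)).support ⊆ Finset.range m ↔
      a.support ⊆ Finset.range (m + 2) ∧ a m = 0 := by
    simp only [support_subset_range_iff, erase_apply]
    refine ⟨fun h => ⟨fun v hv => ?_, by simpa using h m le_rfl⟩, fun ⟨h, hm⟩ v hv => ?_⟩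
    · simpa [show v ≠ m + 1 by omega] using h v (by omega)
    · split_ifs with hv'
      · rfl
      · obtain rfl | hv'' := eq_or_ne v m
        exacts [hm, h v (by omega)]
  have hmem : MemPathPow m t (a.erase (m + 1)) ↔ MemPathPow m t a :=
    memPathPow_congr fun v hv => erase_ne (by omega)
  rw [IsStandard, IsStandard, hsupp, hmem]
  constructor
  · rintro ⟨⟨hs, hm⟩, hnot⟩
    exact ⟨⟨hs, fun h => hnot (h.of_apply_eq_zero hm)⟩, hm⟩
  · rintro ⟨⟨hs, hnot⟩, hm⟩
    exact ⟨⟨hs, hm⟩, fun h => hnot (h.mono_left (by omega))⟩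

theorem isStandard_succ_iff {m t : ℕ} {a : ℕ →₀ ℕ} :
    IsStandard (m + 1) t a ↔ IsStandard (m + 2) t a ∧ a (m + 1) = 0 := by
  simp only [IsStandard, support_subset_range_iff]
  constructor
  · rintro ⟨hs, hnot⟩
    have hm : a (m + 1) = 0 := hs _ le_rfl
    exact ⟨⟨fun v hv => hs v (by omega),
      fun h => hnot ((h.mono_left (by omega)).of_apply_eq_zero hm)⟩, hm⟩
  · rintro ⟨⟨hs, hnot⟩, hm⟩
    refine ⟨fun v hv => ?_, fun h => hnot (h.mono_left (by omega))⟩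
    obtain rfl | hv' := eq_or_ne v (m + 1)
    exacts [hm, hs v (by omega)]

theorem isStandard_add_edge_iff {m t : ℕ} {a : ℕ →₀ ℕ} :
    IsStandard (m + 2) (t + 1) (a + edge m) ↔ IsStandard (m + 2) t a := by
  have hsupp : (a + edge m).support ⊆ Finset.range (m + 2) ↔
      a.support ⊆ Finset.range (m + 2) := by
    simp only [support_subset_range_iff]
    refine forall_congr' fun v => imp_congr_right fun hv => ?_
    simp [edge, show m ≠ v by omega, show m + 1 ≠ v by omega]
  rw [IsStandard, IsStandard, hsupp, memPathPow_add_edge_iff]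

end Standard

section Decomposition

variable {m t : ℕ}

theorem hasStanleyPartition_isStandard_erase {d : ℕ}
    (h : HasStanleyPartition (IsStandard m t) d) :
    HasStanleyPartition (fun a => IsStandard m t (a.erase (m + 1))) (d + 1) :=
  h.comp_erase fun _ ha => support_subset_range_iff.1 ha.1 _ (by omega)

theorem hasStanleyPartition_isStandard_add_single_succ
    (h₁ : HasStanleyPartition (IsStandard m (t + 1)) ((m + 2 - t) / 3 ⊔ min m 1))
    (h₂ : HasStanleyPartition (IsStandard (m + 2) t) ((m + 5 - t) / 3 ⊔ 1)) :
    HasStanleyPartition (fun a => IsStandard (m + 2) (t + 1) (a + single (m + 1) 1))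
      ((m + 5 - t) / 3 ⊔ 1) := by
  refine .of_split m ?_ ?_
  · refine ((hasStanleyPartition_isStandard_erase h₁).mono ?_).of_iff fun a => ?_
    · omega
    · have ham : (a + single (m + 1) 1 : ℕ →₀ ℕ) m = a m := by simp
      rw [← ham, ← isStandard_erase_iff, erase_add, erase_single, add_zero]
  · refine h₂.of_iff fun a => ?_
    rw [add_assoc, ← edge, isStandard_add_edge_iff]

theorem hasStanleyPartition_isStandard_add_two
    (h₁ : HasStanleyPartition (IsStandard m (t + 1)) ((m + 2 - t) / 3 ⊔ min m 1))
    (h₂ : HasStanleyPartition (fun a => IsStandard (m + 1) (t + 1) (a + single m 1))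
      ((m + 4 - t) / 3 ⊔ 1))
    (h₃ : HasStanleyPartition (IsStandard (m + 2) t) ((m + 5 - t) / 3 ⊔ 1)) :
    HasStanleyPartition (IsStandard (m + 2) (t + 1)) ((m + 4 - t) / 3 ⊔ 1) := by
  refine .of_split m ?_ (.of_split (m + 1) ?_ ?_)
  · refine ((hasStanleyPartition_isStandard_erase h₁).mono ?_).of_iff fun a => ?_
    · omega
    · exact isStandard_erase_iff
  · refine h₂.of_iff fun a => ?_
    have ham : (a + single m 1 : ℕ →₀ ℕ) (m + 1) = a (m + 1) := by simp
    rw [← ham, isStandard_succ_iff]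
  · refine (h₃.mono ?_).of_iff fun a => ?_
    · omega
    · rw [add_assoc, add_comm (single (m + 1) 1), ← edge, isStandard_add_edge_iff]

theorem hasStanleyPartition_isStandard_of_le_one {n : ℕ} (hn : n ≤ 1) :
    HasStanleyPartition (IsStandard n (t + 1)) n := by
  simpa using (hasStanleyPartition_support_subset (Finset.range n)).of_iff
    fun a => (isStandard_iff_of_le_one hn t a).symm

theorem isStandard_one_add_single_zero_iff {a : ℕ →₀ ℕ} :
    IsStandard 1 (t + 1) (a + single 0 1) ↔ IsStandard 1 (t + 1) a := by
  simp only [isStandard_iff_of_le_one le_rfl, support_subset_range_iff]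
  refine forall_congr' fun v => imp_congr_right fun hv => ?_
  simp [show v ≠ 0 by omega]

end Decomposition

theorem hasStanleyPartition_isStandard (t n : ℕ) :
    HasStanleyPartition (IsStandard n t) ((n + 3 - t) / 3 ⊔ min n 1) ∧
      HasStanleyPartition (fun a => IsStandard (n + 1) t (a + single n 1))
        ((n + 5 - t) / 3 ⊔ 1) := by
  induction t generalizing n with
  | zero =>
    exact ⟨.of_forall_not (not_isStandard_zero n) _,
      .of_forall_not (fun _ => not_isStandard_zero _ _) _⟩
  | succ t ih =>
    induction n using Nat.strong_induction_on with
    | _ n ihn =>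
    constructor
    · rcases n with _ | _ | m
      · exact (hasStanleyPartition_isStandard_of_le_one zero_le_one).mono (by omega)
      · exact (hasStanleyPartition_isStandard_of_le_one le_rfl).mono (by omega)
      · refine (hasStanleyPartition_isStandard_add_two ((ihn m (by omega)).1.mono ?_)
          ((ihn m (by omega)).2.mono ?_) (ih (m + 2)).1).mono ?_ <;> omega
    · rcases n with _ | m
      · exact ((hasStanleyPartition_isStandard_of_le_one le_rfl).of_iff
          fun a => isStandard_one_add_single_zero_iff.symm).mono (by omega)
      · refine (hasStanleyPartition_isStandard_add_single_succ ((ihn m (by omega)).1.mono ?_)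
          ((ih (m + 2)).1.mono ?_)).mono ?_ <;> omega

section Monomials

open scoped Pointwise

variable {n t : ℕ}

def edgeExponents (n : ℕ) : Set (Fin n →₀ ℕ) :=
  {b | ∃ i j : Fin n, (j : ℕ) = i + 1 ∧ (i : ℕ) + 2 ≤ n ∧ b = single i 1 + single j 1}

def pathPowExponents (n t : ℕ) : Set (Fin n →₀ ℕ) :=
  {b | ∃ e : ℕ →₀ ℕ, (∀ i ∈ e.support, i + 2 ≤ n) ∧ degree e = t ∧
    b.embDomain Fin.valEmbedding = edgeSum e}

theorem pathIdeal_eq_span (K : Type*) [Field K] (n : ℕ) :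
    pathIdeal K n n = Ideal.span ((fun b => monomial b (1 : K)) '' edgeExponents n) := by
  unfold pathIdeal edgeExponents
  congr 1
  ext p
  simp only [Set.mem_ofPred_eq, Set.mem_image]
  constructor
  · rintro ⟨i, j, hj, hi, rfl⟩
    exact ⟨_, ⟨i, j, hj, hi, rfl⟩, by simp [X, monomial_mul]⟩
  · rintro ⟨_, ⟨i, j, hj, hi, rfl⟩, rfl⟩
    exact ⟨i, j, hj, hi, by simp [X, monomial_mul]⟩

theorem pathPowExponents_zero : pathPowExponents n 0 = {0} := by
  ext b
  simp [pathPowExponents, degree_eq_zero_iff, edgeSum_zero, embDomain_eq_zero]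

theorem pathPowExponents_succ :
    pathPowExponents n (t + 1) = pathPowExponents n t + edgeExponents n := by
  ext b
  simp only [Set.mem_add, pathPowExponents, edgeExponents, Set.mem_ofPred_eq]
  constructor
  · rintro ⟨e, he, hdeg, hb⟩
    obtain ⟨i, hi⟩ : ∃ i, e i ≠ 0 := by
      by_contra! h
      simp [show e = 0 from Finsupp.ext h] at hdeg
    have hin := he i (Finsupp.mem_support_iff.2 hi)
    obtain ⟨e, rfl⟩ := exists_eq_add_single_one hi
    obtain ⟨c, hc⟩ := exists_embDomain_eq_of_le
      (hb ▸ edgeSum_mono (le_self_add : e ≤ e + single i 1))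
    refine ⟨c, ⟨e, fun j hj => he j ?_, by simpa [degree_single] using hdeg, hc⟩,
      _, ⟨⟨i, by omega⟩, ⟨i + 1, by omega⟩, rfl, hin, rfl⟩, ?_⟩
    · simp only [Finsupp.mem_support_iff, Finsupp.add_apply] at hj ⊢
      omega
    · apply embDomain_injective Fin.valEmbedding
      simp [embDomain_add, hc, hb, edgeSum_add, edgeSum_single_one, edge, embDomain_single]
  · rintro ⟨c, ⟨e, he, hdeg, hc⟩, _, ⟨i, j, hj, hi, rfl⟩, rfl⟩
    refine ⟨e + single (i : ℕ) 1, fun k hk => ?_, by simp [hdeg, degree_single], ?_⟩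
    · rcases eq_or_ne k i with rfl | hki
      · exact hi
      · exact he k (by simpa [single_apply, Ne.symm hki] using hk)
    · simp [embDomain_add, hc, edgeSum_add, edgeSum_single_one, edge, embDomain_single, hj]

theorem pathIdeal_pow_eq_span (K : Type*) [Field K] (n t : ℕ) :
    pathIdeal K n n ^ t = Ideal.span ((fun b => monomial b (1 : K)) '' pathPowExponents n t) := by
  induction t with
  | zero => simp [pathPowExponents_zero, monomial_zero']
  | succ t ih =>
    rw [pow_succ, ih, pathIdeal_eq_span, Ideal.span_mul_span', pathPowExponents_succ,
      ← Set.image2_add, ← Set.image2_mul, Set.image_image2_distrib]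
    simp [monomial_mul]

theorem monomial_mem_pathIdeal_pow_iff (K : Type*) [Field K] (a : Fin n →₀ ℕ) :
    monomial a (1 : K) ∈ pathIdeal K n n ^ t ↔ MemPathPow n t (a.embDomain Fin.valEmbedding) := by
  classical
  rw [pathIdeal_pow_eq_span, mem_ideal_span_monomial_image, support_monomial, if_neg one_ne_zero]
  simp only [Finset.mem_singleton, forall_eq, pathPowExponents, Set.mem_ofPred_eq]
  constructor
  · rintro ⟨b, ⟨e, he, hdeg, hb⟩, hba⟩
    exact ⟨e, he, hdeg, hb ▸ (embDomain_le_embDomain_iff_le _ _ _).2 hba⟩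
  · rintro ⟨e, he, hdeg, hle⟩
    obtain ⟨b, hb⟩ := exists_embDomain_eq_of_le hle
    exact ⟨b, ⟨e, he, hdeg, hb⟩, (embDomain_le_embDomain_iff_le _ _ _).1 (hb ▸ hle)⟩

end Monomials

end PathIdeal

open PathIdeal

/-- For `n ≥ 2`, `t ≥ 1` and `I = I(P_n)` the edge ideal of the path `P_n` in
`S = K[x_1, …, x_n]`, one has `sdepth (S/Iᵗ) ≥ max {⌈(n - t + 1)/3⌉, 1}`. -/
theorem sdepth_pathIdeal_pow_ge {K : Type*} [Field K] (n t : ℕ) (hn : 2 ≤ n) (ht : 1 ≤ t) :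
    max ⌈((n : ℚ) - t + 1) / 3⌉ 1 ≤ (sdepth ((pathIdeal K n n) ^ t) : ℤ) := by
  obtain ⟨t, rfl⟩ : ∃ t', t = t' + 1 := ⟨t - 1, by omega⟩
  have hstd (a : Fin n →₀ ℕ) : IsStandard n (t + 1) (a.embDomain Fin.valEmbedding) ↔
      monomial a (1 : K) ∉ pathIdeal K n n ^ (t + 1) := by
    rw [monomial_mem_pathIdeal_pow_iff, IsStandard, and_iff_right]
    simp [Finset.subset_iff, Finsupp.support_embDomain]
  have hpart := ((hasStanleyPartition_isStandard (t + 1) n).1.comp_embDomain Fin.valEmbedding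
    fun a ha => by simpa [Fin.range_val, ← Finset.coe_range] using ha.1).of_iff hstd
  have hI : pathIdeal K n n ^ (t + 1) ≠ ⊤ := by
    rw [Ne, Ideal.eq_top_iff_one, ← C_1, ← monomial_zero', monomial_mem_pathIdeal_pow_iff,
      Finsupp.embDomain_zero]
    exact not_memPathPow_zero n t
  have hle := le_sdepth_of_hasStanleyPartition hI hpart
  rw [max_le_iff, Int.ceil_le, div_le_iff₀ three_pos]
  constructor
  · have : (n : ℤ) - (t + 1 : ℕ) + 1 ≤ sdepth (pathIdeal K n n ^ (t + 1)) * 3 := by omega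
    exact_mod_cast this
  · omega
end
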